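/- For all t ∈ (0,1), the Legendre relation holds: E(t)K(1−t) + E(1−t)K(t) − K(1−t)K(t) = π/2. -/

import Mathlib

/-
Put `L(t) = E(t)K(1-t) + E(1-t)K(t) - K(1-t)K(t)`. Writing `E` and `K` as the moments
`∫ (1 - t sin²θ)^p` with `p = 1/2` and `p = -1/2`, differentiation under the integral sign and
the three-term recurrence between the moments of exponents `q - 1, q, q + 1` (integrate the
derivative of `sin θ cos θ (1 - t sin²θ)^q`) give `E' = (E - K)/(2t)` and
`K' = (E - (1-t)K)/(2t(1-t))`, so `L' = 0` on `(0,1)`. Rewriting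
`L(t) = E(1-t)K(t) - (K(t) - E(t))K(1-t)`, the last product is `O(√t)`
because `K - E ≤ tK` and `K(1-t) ≤ (π/2) t^{-1/2}`, so `L(0+) = E(1)K(0) = π/2`.
-/

open Real Filter intervalIntegral

noncomputable section

/-- Complete elliptic integral of the first kind, parameter `t = k²`. -/
def Kel (t : ℝ) : ℝ := ∫ θ in (0:ℝ)..(π/2), 1 / Real.sqrt (1 - t * Real.sin θ ^ 2)

/-- Complete elliptic integral of the second kind, parameter `t = k²`. -/
def Eel (t : ℝ) : ℝ := ∫ θ in (0:ℝ)..(π/2), Real.sqrt (1 - t * Real.sin θ ^ 2)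

/-- The modular parameter `τ(t) = i K(1−t)/K(t)`. -/
def tauP (t : ℝ) : ℂ := Complex.I * (Kel (1 - t)) / (Kel t)

/-- Jacobi theta function θ₁. -/
def theta1 (u τ : ℂ) : ℂ :=
  2 * ∑' n : ℕ, (-1 : ℂ) ^ n * Complex.exp (π * Complex.I * τ * ((n : ℂ) + 1/2) ^ 2) *
      Complex.sin ((2 * (n : ℂ) + 1) * u)

/-- Jacobi theta function θ₂. -/
def theta2 (u τ : ℂ) : ℂ :=
  2 * ∑' n : ℕ, Complex.exp (π * Complex.I * τ * ((n : ℂ) + 1/2) ^ 2) *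
      Complex.cos ((2 * (n : ℂ) + 1) * u)

/-- Jacobi theta function θ₃. -/
def theta3 (u τ : ℂ) : ℂ :=
  1 + 2 * ∑' n : ℕ, Complex.exp (π * Complex.I * τ * ((n : ℂ) + 1) ^ 2) *
      Complex.cos (2 * ((n : ℂ) + 1) * u)

/-- Jacobi theta function θ₄. -/
def theta4 (u τ : ℂ) : ℂ :=
  1 + 2 * ∑' n : ℕ, (-1 : ℂ) ^ (n + 1) * Complex.exp (π * Complex.I * τ * ((n : ℂ) + 1) ^ 2) *
      Complex.cos (2 * ((n : ℂ) + 1) * u)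

/-- Jacobi elliptic sn, parameter `t = k²`, via theta quotients. -/
def snJ (u : ℂ) (t : ℝ) : ℂ :=
  (t : ℂ) ^ (-(1/4 : ℂ)) *
    theta1 (π * u / (2 * Kel t)) (tauP t) / theta4 (π * u / (2 * Kel t)) (tauP t)

/-- Jacobi elliptic cn. -/
def cnJ (u : ℂ) (t : ℝ) : ℂ :=
  ((1 - t : ℂ) / (t : ℂ)) ^ (1/4 : ℂ) *
    theta2 (π * u / (2 * Kel t)) (tauP t) / theta4 (π * u / (2 * Kel t)) (tauP t)

/-- Jacobi elliptic dn. -/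
def dnJ (u : ℂ) (t : ℝ) : ℂ :=
  (1 - t : ℂ) ^ (1/4 : ℂ) *
    theta3 (π * u / (2 * Kel t)) (tauP t) / theta4 (π * u / (2 * Kel t)) (tauP t)

/-- Incomplete elliptic integral of the second kind ℰ(u,t) = ∫₀ᵘ dn²(x,t) dx. -/
def Einc (u : ℝ) (t : ℝ) : ℂ := ∫ x in (0:ℝ)..u, (dnJ (x : ℂ) t) ^ 2

open Set Topology Metric

def ellipticMoment (p t : ℝ) : ℝ := ∫ θ in (0:ℝ)..(π/2), (1 - t * sin θ ^ 2) ^ p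

lemma one_sub_mul_sin_sq_pos {t : ℝ} (ht : t < 1) (θ : ℝ) : 0 < 1 - t * sin θ ^ 2 := by
  rcases le_or_gt t 0 with h | h
  · nlinarith [sq_nonneg (sin θ)]
  · nlinarith [sin_sq_le_one θ]

lemma one_sub_le_one_sub_mul_sin_sq {t : ℝ} (ht : 0 ≤ t) (θ : ℝ) :
    1 - t ≤ 1 - t * sin θ ^ 2 := by
  nlinarith [sin_sq_le_one θ]

lemma intervalIntegrable_rpow_one_sub_mul_sin_sq (p : ℝ) {t : ℝ} (ht : t < 1) (a b : ℝ) :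
    IntervalIntegrable (fun θ => (1 - t * sin θ ^ 2) ^ p) MeasureTheory.volume a b :=
  (Continuous.rpow_const (by fun_prop) fun θ => Or.inl (one_sub_mul_sin_sq_pos ht θ).ne')
    |>.intervalIntegrable a b

lemma hasDerivAt_ellipticMoment_of_lt_one (p : ℝ) {t : ℝ} (ht : t < 1) :
    HasDerivAt (ellipticMoment p)
      (-p * ∫ θ in (0:ℝ)..(π/2), sin θ ^ 2 * (1 - t * sin θ ^ 2) ^ (p - 1)) t := by
  rw [← integral_const_mul]
  have hr : 0 < (1 - t) / 2 := by linarith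
  have hball : closedBall t ((1 - t) / 2) ⊆ Iio 1 := fun x hx =>
    mem_Iio.2 (by linarith [le_of_abs_le (mem_closedBall_iff_norm.1 hx)])
  set F' : ℝ → ℝ → ℝ := fun x θ => -p * (sin θ ^ 2 * (1 - x * sin θ ^ 2) ^ (p - 1))
  have hF'_cont : ContinuousOn (Function.uncurry F') (Iio 1 ×ˢ univ) := by
    refine continuousOn_const.mul ((by fun_prop : ContinuousOn _ _).mul
      (ContinuousOn.rpow_const (by fun_prop) ?_))
    rintro ⟨x, θ⟩ ⟨hx, -⟩
    exact Or.inl (one_sub_mul_sin_sq_pos hx θ).ne'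
  obtain ⟨C, hC⟩ := ((isCompact_closedBall t _).prod isCompact_Icc).exists_bound_of_continuousOn
    (hF'_cont.mono (prod_mono hball (subset_univ (Icc 0 (π / 2)))))
  refine (hasDerivAt_integral_of_dominated_loc_of_deriv_le (F' := F') (bound := fun _ => C)
    (ball_mem_nhds t hr) ?_ (intervalIntegrable_rpow_one_sub_mul_sin_sq p ht 0 _) ?_ ?_
    intervalIntegrable_const ?_).2
  · filter_upwards [Iio_mem_nhds ht] with x hx
    exact (intervalIntegrable_rpow_one_sub_mul_sin_sq p hx 0 (π / 2)).def'.aestronglyMeasurable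
  · refine (continuous_const.mul ((by fun_prop : Continuous _).mul ?_)).aestronglyMeasurable
    exact Continuous.rpow_const (by fun_prop) fun θ => Or.inl (one_sub_mul_sin_sq_pos ht θ).ne'
  · refine Eventually.of_forall fun θ hθ x hx => ?_
    rw [uIoc_of_le (by positivity)] at hθ
    exact hC (x, θ) ⟨ball_subset_closedBall hx, Ioc_subset_Icc_self hθ⟩
  · refine Eventually.of_forall fun θ _ x hx => ?_
    have hpos := one_sub_mul_sin_sq_pos (hball (ball_subset_closedBall hx)) θ
    have := (((hasDerivAt_id' x).mul_const (sin θ ^ 2)).const_sub 1).rpow_const (p := p)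
      (Or.inl hpos.ne')
    exact this.congr_deriv (by ring)

lemma mul_integral_sin_sq_mul_rpow (p : ℝ) {t : ℝ} (ht : t < 1) :
    t * ∫ θ in (0:ℝ)..(π/2), sin θ ^ 2 * (1 - t * sin θ ^ 2) ^ (p - 1)
      = ellipticMoment (p - 1) t - ellipticMoment p t := by
  rw [ellipticMoment, ellipticMoment, ← integral_const_mul, ← integral_sub
    (intervalIntegrable_rpow_one_sub_mul_sin_sq _ ht _ _)
    (intervalIntegrable_rpow_one_sub_mul_sin_sq _ ht _ _)]
  refine integral_congr fun θ _ => ?_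
  have hpos := one_sub_mul_sin_sq_pos ht θ
  rw [rpow_sub_one hpos.ne']
  field_simp
  ring

lemma hasDerivAt_ellipticMoment (p : ℝ) {t : ℝ} (ht0 : t ≠ 0) (ht1 : t < 1) :
    HasDerivAt (ellipticMoment p) (p * (ellipticMoment p t - ellipticMoment (p - 1) t) / t) t := by
  convert hasDerivAt_ellipticMoment_of_lt_one p ht1 using 1
  field_simp
  linear_combination p * mul_integral_sin_sq_mul_rpow p ht1

lemma ellipticMoment_recurrence (q : ℝ) {t : ℝ} (ht : t < 1) :
    2 * (1 + q) * ellipticMoment (q + 1) t + (t - 2) * (1 + 2 * q) * ellipticMoment q t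
      + 2 * q * (1 - t) * ellipticMoment (q - 1) t = 0 := by
  have hderiv : ∀ θ, HasDerivAt (fun θ => t * (sin θ * cos θ * (1 - t * sin θ ^ 2) ^ q))
      (2 * (1 + q) * (1 - t * sin θ ^ 2) ^ (q + 1)
        + (t - 2) * (1 + 2 * q) * (1 - t * sin θ ^ 2) ^ q
        + 2 * q * (1 - t) * (1 - t * sin θ ^ 2) ^ (q - 1)) θ := by
    intro θ
    have hpos := one_sub_mul_sin_sq_pos ht θ
    have h := (((hasDerivAt_sin θ).fun_mul (hasDerivAt_cos θ)).fun_mul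
      ((((hasDerivAt_sin θ).fun_pow 2).const_mul t).const_sub 1 |>.rpow_const (p := q)
        (Or.inl hpos.ne'))).const_mul t
    refine h.congr_deriv ?_
    rw [rpow_add_one hpos.ne', rpow_sub_one hpos.ne']
    field_simp
    simp only [cos_sq', Nat.cast_ofNat, Nat.add_one_sub_one, pow_one]
    ring
  have hI := fun p => (intervalIntegrable_rpow_one_sub_mul_sin_sq p ht 0 (π / 2)).const_mul
  have hint := integral_eq_sub_of_hasDerivAt (fun θ _ => hderiv θ)
    (((hI _ _).add (hI _ _)).add (hI _ _))
  simp only [cos_pi_div_two, sin_zero, mul_zero, zero_mul, sub_zero] at hint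
  rwa [integral_add ((hI _ _).add (hI _ _)) (hI _ _), integral_add (hI _ _) (hI _ _),
    integral_const_mul, integral_const_mul, integral_const_mul] at hint

lemma ellipticMoment_nonneg (p : ℝ) {t : ℝ} (ht : t < 1) : 0 ≤ ellipticMoment p t :=
  integral_nonneg (by positivity) fun θ _ => rpow_nonneg (one_sub_mul_sin_sq_pos ht θ).le p

lemma ellipticMoment_le {p t : ℝ} (hp : p ≤ 0) (ht0 : 0 ≤ t) (ht1 : t < 1) :
    ellipticMoment p t ≤ π / 2 * (1 - t) ^ p := by
  have h := integral_mono pi_div_two_pos.le (intervalIntegrable_rpow_one_sub_mul_sin_sq p ht1 0 _)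
    intervalIntegrable_const fun θ =>
      rpow_le_rpow_of_nonpos (by linarith) (one_sub_le_one_sub_mul_sin_sq ht0 θ) hp
  simpa [ellipticMoment] using h

lemma Eel_eq_ellipticMoment : Eel = ellipticMoment (1 / 2) :=
  funext fun _ => integral_congr fun _ _ => sqrt_eq_rpow _

lemma Kel_eq_ellipticMoment {t : ℝ} (ht : t < 1) : Kel t = ellipticMoment (-(1 / 2)) t :=
  integral_congr fun θ _ => by
    rw [rpow_neg (one_sub_mul_sin_sq_pos ht θ).le, sqrt_eq_rpow, one_div (_ ^ _)]

lemma Kel_eventuallyEq_ellipticMoment {t : ℝ} (ht : t < 1) :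
    Kel =ᶠ[𝓝 t] ellipticMoment (-(1 / 2)) :=
  eventually_of_mem (Iio_mem_nhds ht) fun _ hs => Kel_eq_ellipticMoment hs

lemma hasDerivAt_Eel {t : ℝ} (ht0 : t ≠ 0) (ht1 : t < 1) :
    HasDerivAt Eel ((Eel t - Kel t) / (2 * t)) t := by
  rw [Eel_eq_ellipticMoment, Kel_eq_ellipticMoment ht1]
  convert hasDerivAt_ellipticMoment (1 / 2) ht0 ht1 using 1
  rw [show (1 / 2 : ℝ) - 1 = -(1 / 2) by norm_num]
  ring

lemma hasDerivAt_Kel {t : ℝ} (ht0 : t ≠ 0) (ht1 : t < 1) :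
    HasDerivAt Kel ((Eel t - (1 - t) * Kel t) / (2 * t * (1 - t))) t := by
  have hrec := ellipticMoment_recurrence (-(1 / 2)) ht1
  rw [show -(1 / 2 : ℝ) + 1 = 1 / 2 by norm_num, ← Eel_eq_ellipticMoment,
    ← Kel_eq_ellipticMoment ht1, show -(1 / 2 : ℝ) - 1 = -(3 / 2) by norm_num] at hrec
  refine ((hasDerivAt_ellipticMoment _ ht0 ht1).congr_of_eventuallyEq
    (Kel_eventuallyEq_ellipticMoment ht1)).congr_deriv ?_
  rw [← Kel_eq_ellipticMoment ht1, show -(1 / 2 : ℝ) - 1 = -(3 / 2) by norm_num]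
  have : 1 - t ≠ 0 := by linarith
  field_simp
  linear_combination -hrec

lemma continuous_Eel : Continuous Eel :=
  continuous_parametric_intervalIntegral_of_continuous' (by fun_prop) _ _

lemma continuousAt_Kel {t : ℝ} (ht : t < 1) : ContinuousAt Kel t :=
  ((hasDerivAt_ellipticMoment_of_lt_one _ ht).continuousAt).congr
    (Kel_eventuallyEq_ellipticMoment ht).symm

lemma Eel_one : Eel 1 = 1 := by
  have h : ∀ θ ∈ uIcc 0 (π / 2), √(1 - 1 * sin θ ^ 2) = cos θ := fun θ hθ => by
    rw [uIcc_of_le (by positivity)] at hθ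
    rw [one_mul, ← cos_sq',
      sqrt_sq (cos_nonneg_of_mem_Icc ⟨by linarith [hθ.1, pi_pos], hθ.2⟩)]
  rw [Eel, integral_congr h]
  simp

lemma Kel_zero : Kel 0 = π / 2 := by
  simp [Kel]

lemma Kel_nonneg {t : ℝ} (ht : t < 1) : 0 ≤ Kel t :=
  Kel_eq_ellipticMoment ht ▸ ellipticMoment_nonneg _ ht

lemma Kel_le {t : ℝ} (ht0 : 0 ≤ t) (ht1 : t < 1) :
    Kel t ≤ π / 2 * (1 - t) ^ (-(1 / 2) : ℝ) :=
  Kel_eq_ellipticMoment ht1 ▸ ellipticMoment_le (by norm_num) ht0 ht1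

lemma Kel_sub_Eel_eq {t : ℝ} (ht : t < 1) :
    Kel t - Eel t =
      t * ∫ θ in (0:ℝ)..(π/2), sin θ ^ 2 * (1 - t * sin θ ^ 2) ^ (-(1 / 2) : ℝ) := by
  have h := mul_integral_sin_sq_mul_rpow (1 / 2) ht
  rw [show (1 / 2 : ℝ) - 1 = -(1 / 2) by norm_num] at h
  rw [h, Kel_eq_ellipticMoment ht, Eel_eq_ellipticMoment]

lemma Kel_sub_Eel_mem_Icc {t : ℝ} (ht0 : 0 ≤ t) (ht1 : t < 1) :
    Kel t - Eel t ∈ Icc 0 (t * Kel t) := by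
  have hΔ := fun θ => rpow_nonneg (one_sub_mul_sin_sq_pos ht1 θ).le (-(1 / 2) : ℝ)
  have hint := intervalIntegrable_rpow_one_sub_mul_sin_sq (-(1 / 2)) ht1 0 (π / 2)
  rw [Kel_sub_Eel_eq ht1]
  refine ⟨mul_nonneg ht0 (integral_nonneg pi_div_two_pos.le fun θ _ =>
    mul_nonneg (sq_nonneg _) (hΔ θ)), mul_le_mul_of_nonneg_left ?_ ht0⟩
  rw [Kel_eq_ellipticMoment ht1]
  exact integral_mono pi_div_two_pos.le (hint.continuousOn_mul (by fun_prop)) hint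
    fun θ => mul_le_of_le_one_left (hΔ θ) (sin_sq_le_one θ)

lemma tendsto_Kel_sub_Eel_mul_Kel_one_sub :
    Tendsto (fun t => (Kel t - Eel t) * Kel (1 - t)) (𝓝[>] 0) (𝓝 0) := by
  have hbound : Tendsto (fun t => π / 2 * (t ^ (1 / 2 : ℝ) * Kel t)) (𝓝[>] 0) (𝓝 0) := by
    have h : ContinuousAt (fun t => π / 2 * (t ^ (1 / 2 : ℝ) * Kel t)) 0 :=
      continuousAt_const.mul ((continuousAt_id.rpow_const (Or.inr (by norm_num))).mul
        (continuousAt_Kel zero_lt_one))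
    simpa using h.tendsto.mono_left nhdsWithin_le_nhds
  refine tendsto_of_tendsto_of_tendsto_of_le_of_le' tendsto_const_nhds hbound ?_ ?_ <;>
    filter_upwards [Ioo_mem_nhdsGT zero_lt_one] with t ⟨ht0, ht1⟩
  · exact mul_nonneg (Kel_sub_Eel_mem_Icc ht0.le ht1).1 (Kel_nonneg (by linarith))
  · have hK := Kel_le (t := 1 - t) (by linarith) (by linarith)
    rw [sub_sub_cancel] at hK
    calc (Kel t - Eel t) * Kel (1 - t) ≤ t * Kel t * (π / 2 * t ^ (-(1 / 2) : ℝ)) :=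
          mul_le_mul (Kel_sub_Eel_mem_Icc ht0.le ht1).2 hK (Kel_nonneg (by linarith))
            (mul_nonneg ht0.le (Kel_nonneg ht1))
      _ = π / 2 * (t * t ^ (-(1 / 2) : ℝ) * Kel t) := by ring
      _ = π / 2 * (t ^ (1 / 2 : ℝ) * Kel t) := by
          rw [← rpow_one_add' ht0.le (by norm_num)]
          norm_num

def legendreFun (t : ℝ) : ℝ := Eel t * Kel (1 - t) + Eel (1 - t) * Kel t - Kel (1 - t) * Kel t

lemma hasDerivAt_legendreFun {t : ℝ} (ht : t ∈ Ioo 0 1) : HasDerivAt legendreFun 0 t := by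
  obtain ⟨ht0, ht1⟩ := ht
  have hs0 : 1 - t ≠ 0 := by linarith
  have hs1 : 1 - t < 1 := by linarith
  have hreflect : HasDerivAt (fun s : ℝ => 1 - s) (-1) t := by
    simpa using (hasDerivAt_id t).const_sub 1
  have hE := hasDerivAt_Eel ht0.ne' ht1
  have hK := hasDerivAt_Kel ht0.ne' ht1
  have hE' : HasDerivAt (fun s => Eel (1 - s)) _ t := (hasDerivAt_Eel hs0 hs1).comp t hreflect
  have hK' : HasDerivAt (fun s => Kel (1 - s)) _ t := (hasDerivAt_Kel hs0 hs1).comp t hreflect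
  refine (((hE.mul hK').add (hE'.mul hK)).sub (hK'.mul hK)).congr_deriv ?_
  rw [sub_sub_cancel]
  field_simp
  ring

lemma tendsto_legendreFun : Tendsto legendreFun (𝓝[>] 0) (𝓝 (π / 2)) := by
  have hE : Tendsto (fun t => Eel (1 - t)) (𝓝[>] 0) (𝓝 1) := by
    have h := (continuous_Eel.comp (continuous_sub_left 1)).tendsto 0
    simpa [Function.comp_def, Eel_one] using h.mono_left nhdsWithin_le_nhds
  have hK : Tendsto Kel (𝓝[>] 0) (𝓝 (π / 2)) :=
    Kel_zero ▸ (continuousAt_Kel zero_lt_one).tendsto.mono_left nhdsWithin_le_nhds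
  have h := (hE.mul hK).sub tendsto_Kel_sub_Eel_mul_Kel_one_sub
  rw [one_mul, sub_zero] at h
  refine h.congr fun t => ?_
  rw [legendreFun]
  ring

theorem legendre_relation (t : ℝ) (ht : t ∈ Set.Ioo (0:ℝ) 1) :
    Eel t * Kel (1 - t) + Eel (1 - t) * Kel t - Kel (1 - t) * Kel t = π / 2 := by
  obtain ⟨c, hc⟩ := isOpen_Ioo.exists_is_const_of_deriv_eq_zero isPreconnected_Ioo
    (fun s hs => (hasDerivAt_legendreFun hs).differentiableAt.differentiableWithinAt)
    (fun s hs => (hasDerivAt_legendreFun hs).deriv)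
  have hlim : Tendsto legendreFun (𝓝[>] 0) (𝓝 c) :=
    tendsto_const_nhds.congr' <| eventually_of_mem (Ioo_mem_nhdsGT zero_lt_one)
      fun s hs => (hc s hs).symm
  exact (hc t ht).trans (tendsto_nhds_unique hlim tendsto_legendreFun)

end
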